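/- Let A be an m-by-n totally positive real matrix and let b be a real number. Then no finite collection of orthogonal cycles, all of whose positions p satisfy A p = b, is positive. -/
import Mathlib


/-- An m-by-n real matrix is totally positive if every minor of it
(of every size) is strictly positive. -/
def TotallyPositive {m n : ℕ} (A : Matrix (Fin m) (Fin n) ℝ) : Prop :=
  ∀ (k : ℕ) (f : Fin k → Fin m) (g : Fin k → Fin n),
    StrictMono f → StrictMono g → 0 < (A.submatrix f g).det

/-- `p 0, p 1, …, p (2k)` is an orthogonal cycle: it closes up, consecutive
even/odd positions share a row and consecutive odd/even positions share a
column. -/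
def IsOrthoCycle {m n : ℕ} (k : ℕ) (p : ℕ → Fin m × Fin n) : Prop :=
  1 ≤ k ∧ p 0 = p (2 * k) ∧
    ∀ i < k, (p (2 * i)).1 = (p (2 * i + 1)).1 ∧ (p (2 * i + 1)).2 = (p (2 * i + 2)).2

/-- The function 𝔠_C(i,j): the number of even-indexed positions p_{2l}
(1 ≤ l ≤ k) lying strictly below-right of (i,j), minus the corresponding
number of odd-indexed positions p_{2l−1}. -/
def cycleCount {m n : ℕ} (k : ℕ) (p : ℕ → Fin m × Fin n) (i j : ℕ) : ℤ :=
  (((Finset.Icc 1 k).filter fun l =>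
      i < ((p (2 * l)).1 : ℕ) + 1 ∧ j < ((p (2 * l)).2 : ℕ) + 1).card : ℤ) -
  (((Finset.Icc 1 k).filter fun l =>
      i < ((p (2 * l - 1)).1 : ℕ) + 1 ∧ j < ((p (2 * l - 1)).2 : ℕ) + 1).card : ℤ)

/-- A finite collection of orthogonal cycles is positive if the sum of the
functions 𝔠 is nonnegative at every pair and positive at some pair. -/
def IsPositiveCollection {m n N : ℕ} (K : Fin N → ℕ)
    (P : Fin N → ℕ → Fin m × Fin n) : Prop :=
  (∀ i j : ℕ, 0 ≤ ∑ a : Fin N, cycleCount (K a) (P a) i j) ∧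
  (∃ i j : ℕ, 0 < ∑ a : Fin N, cycleCount (K a) (P a) i j)

open Finset

/-- helper: sums over `Icc 1 k` reindexed over `range k`. -/
lemma sumIcc {M : Type*} [AddCommMonoid M] (k : ℕ) (f : ℕ → M) :
    ∑ l ∈ Finset.Icc 1 k, f l = ∑ l ∈ Finset.range k, f (l + 1) := by
  induction k with
  | zero => simp
  | succ k ih => rw [Finset.sum_Icc_succ_top (by omega), ih, Finset.sum_range_succ]

/-- truncated cumulative log matrix -/
noncomputable def Mfun {m n : ℕ} (A : Matrix (Fin m) (Fin n) ℝ) : ℕ → ℕ → ℝ :=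
  fun u v =>
    if h : 1 ≤ u ∧ 1 ≤ v ∧ u - 1 < m ∧ v - 1 < n then
      Real.log (A ⟨u - 1, h.2.2.1⟩ ⟨v - 1, h.2.2.2⟩)
    else 0

/-- second difference -/
noncomputable def Dfun {m n : ℕ} (A : Matrix (Fin m) (Fin n) ℝ) : ℕ → ℕ → ℝ :=
  fun i j => (Mfun A (i + 1) (j + 1) - Mfun A i (j + 1)) - (Mfun A (i + 1) j - Mfun A i j)

lemma sum_Dfun {m n : ℕ} (A : Matrix (Fin m) (Fin n) ℝ) (U V : ℕ) :
    ∑ i ∈ range U, ∑ j ∈ range V, Dfun A i j = Mfun A U V := by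
  have inner : ∀ i, ∑ j ∈ range V, Dfun A i j
      = (Mfun A (i + 1) V - Mfun A i V) - (Mfun A (i + 1) 0 - Mfun A i 0) :=
    fun i => Finset.sum_range_sub (fun j => Mfun A (i + 1) j - Mfun A i j) V
  have h0 : ∀ u, Mfun A u 0 = 0 := by intro u; simp [Mfun]
  have h0' : ∀ v, Mfun A 0 v = 0 := by intro v; simp [Mfun]
  calc ∑ i ∈ range U, ∑ j ∈ range V, Dfun A i j
      = ∑ i ∈ range U, ((Mfun A (i + 1) V - Mfun A (i + 1) 0) - (Mfun A i V - Mfun A i 0)) := by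
        refine Finset.sum_congr rfl fun i _ => ?_
        rw [inner i]; ring
    _ = (Mfun A U V - Mfun A U 0) - (Mfun A 0 V - Mfun A 0 0) :=
        Finset.sum_range_sub (fun i => Mfun A i V - Mfun A i 0) U
    _ = Mfun A U V := by rw [h0, h0, h0']; ring

lemma sum_if_range {u M : ℕ} (h : u < M) (g : ℕ → ℝ) :
    ∑ i ∈ Finset.range M, (if i < u + 1 then g i else 0) = ∑ i ∈ Finset.range (u + 1), g i := by
  rw [← Finset.sum_subset (Finset.range_subset_range.mpr (by omega : u + 1 ≤ M))
      (fun x _ hx => if_neg (by simpa [Finset.mem_range] using hx))]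
  exact Finset.sum_congr rfl fun x hx => if_pos (Finset.mem_range.mp hx)

lemma sum_D_point {m n : ℕ} (A : Matrix (Fin m) (Fin n) ℝ) (q : Fin m × Fin n) :
    ∑ i ∈ range m, ∑ j ∈ range n,
      (if i < (q.1 : ℕ) + 1 ∧ j < (q.2 : ℕ) + 1 then Dfun A i j else 0)
      = Real.log (A q.1 q.2) := by
  have step : ∀ i, ∑ j ∈ range n, (if i < (q.1 : ℕ) + 1 ∧ j < (q.2 : ℕ) + 1 then Dfun A i j else 0)
      = if i < (q.1 : ℕ) + 1 then ∑ j ∈ range ((q.2 : ℕ) + 1), Dfun A i j else 0 := by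
    intro i
    by_cases h : i < (q.1 : ℕ) + 1
    · rw [if_pos h, ← sum_if_range q.2.isLt (fun j => Dfun A i j)]
      exact Finset.sum_congr rfl fun j _ => by simp [h]
    · simp [h]
  rw [Finset.sum_congr rfl (fun i _ => step i), sum_if_range q.1.isLt, sum_Dfun]
  have h1 : (q.1 : ℕ) < m := q.1.isLt
  have h2 : (q.2 : ℕ) < n := q.2.isLt
  simp [Mfun, h1, h2]

/-- triple sum commutation -/
lemma sum_comm3 {α β γ : Type*} (s : Finset α) (t : Finset β) (u : Finset γ) (f : α → β → γ → ℝ) :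
    ∑ i ∈ s, ∑ j ∈ t, ∑ l ∈ u, f i j l = ∑ l ∈ u, ∑ i ∈ s, ∑ j ∈ t, f i j l := by
  calc ∑ i ∈ s, ∑ j ∈ t, ∑ l ∈ u, f i j l
      = ∑ i ∈ s, ∑ l ∈ u, ∑ j ∈ t, f i j l :=
        Finset.sum_congr rfl fun i _ => Finset.sum_comm
    _ = ∑ l ∈ u, ∑ i ∈ s, ∑ j ∈ t, f i j l := Finset.sum_comm

/-- cycleCount vanishes on the boundary row i = 0. -/
lemma cycleCount_col {m n : ℕ} {k : ℕ} {p : ℕ → Fin m × Fin n} (hc : IsOrthoCycle k p)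
    (j : ℕ) : cycleCount k p 0 j = 0 := by
  simp only [cycleCount, Finset.card_filter]
  push_cast
  rw [sub_eq_zero, sumIcc, sumIcc]
  refine Finset.sum_congr rfl fun l hl => ?_
  have hl' : l < k := Finset.mem_range.mp hl
  have h1 : 2 * (l + 1) = 2 * l + 2 := by ring
  have h2 : 2 * (l + 1) - 1 = 2 * l + 1 := by omega
  rw [h2, h1, ← (hc.2.2 l hl').2]
  simp

/-- cycleCount vanishes on the boundary column j = 0. -/
lemma cycleCount_row {m n : ℕ} {k : ℕ} {p : ℕ → Fin m × Fin n} (hc : IsOrthoCycle k p)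
    (i : ℕ) : cycleCount k p i 0 = 0 := by
  simp only [cycleCount, Finset.card_filter]
  push_cast
  rw [sub_eq_zero, sumIcc, sumIcc]
  have h1 : ∀ l, 2 * (l + 1) = 2 * l + 2 := fun l => by ring
  have h2 : ∀ l, 2 * (l + 1) - 1 = 2 * l + 1 := fun l => by omega
  set f : ℕ → ℤ := fun t =>
    if i < ((p t).1 : ℕ) + 1 ∧ 0 < ((p t).2 : ℕ) + 1 then 1 else 0 with hf
  have hodd : ∀ l < k, f (2 * l + 1) = f (2 * l) := by
    intro l hl
    simp only [hf]
    have hr := (hc.2.2 l hl).1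
    congr 2
    · rw [hr]
    · -- second conjunct is trivially true on both sides
      simp
  have tele := Finset.sum_range_sub (fun l => f (2 * l)) k
  have hclose : f (2 * k) = f 0 := by simp only [hf]; rw [← hc.2.1]
  calc ∑ l ∈ range k, f (2 * (l + 1))
      = ∑ l ∈ range k, f (2 * l + 2) := by
        exact Finset.sum_congr rfl fun l _ => by rw [h1]
    _ = ∑ l ∈ range k, (f (2 * l + 2) - f (2 * l)) + ∑ l ∈ range k, f (2 * l) := by
        rw [Finset.sum_sub_distrib]; ring
    _ = ∑ l ∈ range k, f (2 * l) := by
        have : ∑ l ∈ range k, (f (2 * l + 2) - f (2 * l)) = f (2 * k) - f 0 := by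
          have := Finset.sum_range_sub (fun l => f (2 * l)) k
          simpa [Nat.mul_succ] using this
        rw [this, hclose]; ring
    _ = ∑ l ∈ range k, f (2 * (l + 1) - 1) := by
        refine Finset.sum_congr rfl fun l hl => ?_
        rw [h2, hodd l (Finset.mem_range.mp hl)]

/-- cycleCount vanishes when i ≥ m or j ≥ n. -/
lemma cycleCount_big {m n : ℕ} {k : ℕ} {p : ℕ → Fin m × Fin n} {i j : ℕ}
    (h : m ≤ i ∨ n ≤ j) : cycleCount k p i j = 0 := by
  have hcond : ∀ (q : Fin m × Fin n), ¬(i < (q.1 : ℕ) + 1 ∧ j < (q.2 : ℕ) + 1) := by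
    rintro q ⟨h1, h2⟩
    have := q.1.isLt
    have := q.2.isLt
    omega
  simp only [cycleCount]
  rw [Finset.filter_false_of_mem (fun l _ => hcond _),
    Finset.filter_false_of_mem (fun l _ => hcond _)]
  simp

lemma entry_pos {m n : ℕ} {A : Matrix (Fin m) (Fin n) ℝ} (hA : TotallyPositive A)
    (u : Fin m) (v : Fin n) : 0 < A u v := by
  have sm1 : StrictMono (fun _ : Fin 1 => u) := fun a b h =>
    absurd (Subsingleton.elim a b) (ne_of_lt h)
  have sm2 : StrictMono (fun _ : Fin 1 => v) := fun a b h =>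
    absurd (Subsingleton.elim a b) (ne_of_lt h)
  have := hA 1 (fun _ => u) (fun _ => v) sm1 sm2
  simpa [Matrix.det_fin_one] using this

lemma Dfun_pos {m n : ℕ} {A : Matrix (Fin m) (Fin n) ℝ} (hA : TotallyPositive A)
    {i j : ℕ} (hi1 : 1 ≤ i) (him : i < m) (hj1 : 1 ≤ j) (hjn : j < n) :
    0 < Dfun A i j := by
  set u1 : Fin m := ⟨i - 1, by omega⟩
  set u2 : Fin m := ⟨i, him⟩
  set v1 : Fin n := ⟨j - 1, by omega⟩
  set v2 : Fin n := ⟨j, hjn⟩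
  have hu : u1 < u2 := by simp only [u1, u2, Fin.lt_def]; omega
  have hv : v1 < v2 := by simp only [v1, v2, Fin.lt_def]; omega
  have smu : StrictMono (![u1, u2] : Fin 2 → Fin m) := by
    intro a b hab; fin_cases a <;> fin_cases b <;> simp_all
  have smv : StrictMono (![v1, v2] : Fin 2 → Fin n) := by
    intro a b hab; fin_cases a <;> fin_cases b <;> simp_all
  have det2 := hA 2 ![u1, u2] ![v1, v2] smu smv
  rw [Matrix.det_fin_two] at det2
  simp only [Matrix.submatrix_apply, Matrix.cons_val_zero, Matrix.cons_val_one,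
    Matrix.head_cons] at det2
  -- det2 : 0 < A u1 v1 * A u2 v2 - A u1 v2 * A u2 v1
  have p11 := entry_pos hA u1 v1
  have p22 := entry_pos hA u2 v2
  have p12 := entry_pos hA u1 v2
  have p21 := entry_pos hA u2 v1
  have hlt : A u1 v2 * A u2 v1 < A u1 v1 * A u2 v2 := by linarith
  have hlog := Real.log_lt_log (mul_pos p12 p21) hlt
  rw [Real.log_mul (ne_of_gt p12) (ne_of_gt p21),
    Real.log_mul (ne_of_gt p11) (ne_of_gt p22)] at hlog
  have e22 : Mfun A (i + 1) (j + 1) = Real.log (A u2 v2) := by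
    simp only [Mfun]
    rw [dif_pos (by omega)]
    all_goals first
    | rfl
    | (congr 1 <;> exact Fin.ext (by omega))
  have e12 : Mfun A i (j + 1) = Real.log (A u1 v2) := by
    simp only [Mfun]
    rw [dif_pos (by omega)]
    all_goals first
    | rfl
    | (congr 1 <;> exact Fin.ext (by omega))
  have e21 : Mfun A (i + 1) j = Real.log (A u2 v1) := by
    simp only [Mfun]
    rw [dif_pos (by omega)]
    all_goals first
    | rfl
    | (congr 1 <;> exact Fin.ext (by omega))
  have e11 : Mfun A i j = Real.log (A u1 v1) := by
    simp only [Mfun]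
    rw [dif_pos (by omega)]
    all_goals first
    | rfl
    | (congr 1 <;> exact Fin.ext (by omega))
  simp only [Dfun, e22, e12, e21, e11]
  linarith

/-- for a totally positive matrix A and a value b, no finite
collection of orthogonal cycles all of whose positions carry the entry b is
positive. -/
theorem stmt_13 (m n : ℕ) (A : Matrix (Fin m) (Fin n) ℝ)
    (hA : TotallyPositive A) (b : ℝ) :
    ¬ ∃ (N : ℕ) (K : Fin N → ℕ) (P : Fin N → ℕ → Fin m × Fin n),
        (∀ a, IsOrthoCycle (K a) (P a)) ∧
        (∀ a, ∀ i ≤ 2 * K a, A (P a i).1 (P a i).2 = b) ∧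
        IsPositiveCollection K P := by
  rintro ⟨N, K, P, hcyc, hval, hnn, i₀, j₀, hpos⟩
  rcases Nat.eq_zero_or_pos N with rfl | hN
  · simp at hpos
  -- each position lies in the matrix, so m, n > 0 where needed
  have hpoint : ∀ (a : Fin N) (t : ℕ), t ≤ 2 * K a →
      ∑ i ∈ range m, ∑ j ∈ range n,
        (if i < ((P a t).1 : ℕ) + 1 ∧ j < ((P a t).2 : ℕ) + 1 then Dfun A i j else 0)
        = Real.log b := by
    intro a t ht
    rw [sum_D_point A (P a t), hval a t ht]
  have inner_zero : ∀ a : Fin N,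
      ∑ i ∈ range m, ∑ j ∈ range n,
        Dfun A i j * ((cycleCount (K a) (P a) i j : ℤ) : ℝ) = 0 := by
    intro a
    have expand : ∀ i j : ℕ, Dfun A i j * ((cycleCount (K a) (P a) i j : ℤ) : ℝ)
        = ∑ l ∈ Finset.Icc 1 (K a),
            ((if i < ((P a (2 * l)).1 : ℕ) + 1 ∧ j < ((P a (2 * l)).2 : ℕ) + 1
                then Dfun A i j else 0)
            - (if i < ((P a (2 * l - 1)).1 : ℕ) + 1 ∧ j < ((P a (2 * l - 1)).2 : ℕ) + 1
                then Dfun A i j else 0)) := by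
      intro i j
      simp only [cycleCount, Finset.card_filter]
      push_cast
      rw [mul_sub, Finset.mul_sum, Finset.mul_sum, ← Finset.sum_sub_distrib]
      refine Finset.sum_congr rfl fun l _ => ?_
      by_cases h1 : (i < ((P a (2 * l)).1 : ℕ) + 1 ∧ j < ((P a (2 * l)).2 : ℕ) + 1) <;>
        by_cases h2 : (i < ((P a (2 * l - 1)).1 : ℕ) + 1 ∧ j < ((P a (2 * l - 1)).2 : ℕ) + 1) <;>
        simp [h1, h2]
    simp only [expand]
    rw [sum_comm3]
    apply Finset.sum_eq_zero
    intro l hl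
    have hl' := Finset.mem_Icc.mp hl
    simp only [Finset.sum_sub_distrib]
    rw [hpoint a (2 * l) (by omega), hpoint a (2 * l - 1) (by omega), sub_self]
  have csum_big : ∀ i j : ℕ, (m ≤ i ∨ n ≤ j) →
      ∑ a, cycleCount (K a) (P a) i j = 0 :=
    fun i j h => Finset.sum_eq_zero fun a _ => cycleCount_big h
  have csum_row : ∀ i, ∑ a, cycleCount (K a) (P a) i 0 = 0 :=
    fun i => Finset.sum_eq_zero fun a _ => cycleCount_row (hcyc a) i
  have csum_col : ∀ j, ∑ a, cycleCount (K a) (P a) 0 j = 0 :=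
    fun j => Finset.sum_eq_zero fun a _ => cycleCount_col (hcyc a) j
  have hi₀ : 1 ≤ i₀ := by
    rcases Nat.eq_zero_or_pos i₀ with rfl | h
    · rw [csum_col j₀] at hpos; exact absurd hpos (lt_irrefl 0)
    · exact h
  have hj₀ : 1 ≤ j₀ := by
    rcases Nat.eq_zero_or_pos j₀ with rfl | h
    · rw [csum_row i₀] at hpos; exact absurd hpos (lt_irrefl 0)
    · exact h
  have him₀ : i₀ < m := by
    by_contra h
    rw [csum_big i₀ j₀ (Or.inl (le_of_not_gt h))] at hpos
    exact absurd hpos (lt_irrefl 0)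
  have hjn₀ : j₀ < n := by
    by_contra h
    rw [csum_big i₀ j₀ (Or.inr (le_of_not_gt h))] at hpos
    exact absurd hpos (lt_irrefl 0)
  have claim1 : ∑ i ∈ range m, ∑ j ∈ range n,
      Dfun A i j * (((∑ a, cycleCount (K a) (P a) i j : ℤ)) : ℝ) = 0 := by
    have key : ∀ i j : ℕ, Dfun A i j * (((∑ a, cycleCount (K a) (P a) i j : ℤ)) : ℝ)
        = ∑ a, Dfun A i j * ((cycleCount (K a) (P a) i j : ℤ) : ℝ) := by
      intro i j; push_cast; rw [Finset.mul_sum]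
    simp only [key]
    rw [sum_comm3]
    exact Finset.sum_eq_zero fun a _ => inner_zero a
  have term_nonneg : ∀ i ∈ range m, ∀ j ∈ range n,
      0 ≤ Dfun A i j * (((∑ a, cycleCount (K a) (P a) i j : ℤ)) : ℝ) := by
    intro i hi j hj
    rcases Nat.eq_zero_or_pos i with rfl | hi1
    · rw [csum_col j]; simp
    rcases Nat.eq_zero_or_pos j with rfl | hj1
    · rw [csum_row i]; simp
    have hD := Dfun_pos hA hi1 (Finset.mem_range.mp hi) hj1 (Finset.mem_range.mp hj)
    have hc := hnn i j
    exact mul_nonneg (le_of_lt hD) (by exact_mod_cast hc)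
  have claim2 : 0 < ∑ i ∈ range m, ∑ j ∈ range n,
      Dfun A i j * (((∑ a, cycleCount (K a) (P a) i j : ℤ)) : ℝ) := by
    apply Finset.sum_pos'
    · intro i hi
      exact Finset.sum_nonneg fun j hj => term_nonneg i hi j hj
    · refine ⟨i₀, Finset.mem_range.mpr him₀, ?_⟩
      apply Finset.sum_pos'
      · intro j hj
        exact term_nonneg i₀ (Finset.mem_range.mpr him₀) j hj
      · exact ⟨j₀, Finset.mem_range.mpr hjn₀,
          mul_pos (Dfun_pos hA hi₀ him₀ hj₀ hjn₀) (by exact_mod_cast hpos)⟩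
  exact absurd claim1 (ne_of_gt claim2)
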